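/- arXiv:2302.00982 — 2 statements merged into one kernel-verified Lean document; each statement's English description precedes it below -/
import Mathlib

section
/- For every y ∈ 𝒴, the function θ ↦ h_ε(θ,y) is Fréchet differentiable at every θ ∈ ℓ̄₁(Λ). Its Fréchet derivative is the bounded linear functional on ℓ̄₁(Λ) given by D_θh_ε(θ,y)[τ] = Σ_{λ∈Λ} conj(g_λ(θ,y)) τ_λ, where g_λ(θ,y) = ∫_𝒳 conj(φ_λ(x)) F_{θ,y}(x) dμ(x), and its operator norm satisfies ‖D_θh_ε(θ,y)‖_op = sup_{‖τ‖_{ℓ1} ≤ 1} |D_θh_ε(θ,y)[τ]| ≤ sup_{λ∈Λ} |g_λ(θ,y)| ≤ 1. -/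
open MeasureTheory Complex Filter Topology

set_option maxHeartbeats 1000000

noncomputable section

/-- Frequencies: `Λ = ℤ^d \ {0}`. -/
abbrev Lam (d : ℕ) := {v : Fin d → ℤ // v ≠ 0}

/-- Negation on `Λ`. -/
def negL {d : ℕ} (l : Lam d) : Lam d := ⟨-l.1, by simpa using l.2⟩

/-- Fourier character `φ_λ(x) = exp(2πi⟨λ,x⟩)`. -/
def phiF {d : ℕ} (l : Lam d) (x : Fin d → ℝ) : ℂ :=
  Complex.exp (2 * (Real.pi : ℂ) * Complex.I * (∑ i, (l.1 i : ℂ) * (x i : ℂ)))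

/-- The real Banach space `ℓ̄₁(Λ)` of complex summable sequences with
`θ_{-λ} = conj (θ_λ)`, as a real submodule of `ℓ¹(Λ; ℂ)`. -/
def SymmL1 (d : ℕ) : Submodule ℝ (lp (fun _ : Lam d => ℂ) 1) where
  carrier := {θ | ∀ l, θ (negL l) = starRingEnd ℂ (θ l)}
  add_mem' := by
    intro a b ha hb l
    simp only [lp.coeFn_add, Pi.add_apply, map_add, ha l, hb l]
  zero_mem' := by
    intro l
    simp [lp.coeFn_zero]
  smul_mem' := by
    intro r a ha l
    simp only [lp.coeFn_smul, Pi.smul_apply, ha l, Complex.real_smul, map_mul,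
      Complex.conj_ofReal]

instance (d : ℕ) : NormedAddCommGroup (SymmL1 d) := inferInstance

instance (d : ℕ) : NormedSpace ℝ (SymmL1 d) := inferInstance

/-- The `λ`-th coefficient of an element of `ℓ̄₁(Λ)`. -/
def coeffL {d : ℕ} (θ : SymmL1 d) (l : Lam d) : ℂ := (θ : lp (fun _ : Lam d => ℂ) 1) l

/-- The unit cube `𝒳 = [0,1]^d`. -/
def cube (d : ℕ) : Set (Fin d → ℝ) := Set.Icc 0 1

/-- The uniform probability measure on the unit cube. -/
def muU (d : ℕ) : Measure (Fin d → ℝ) := volume.restrict (cube d)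

/-- `u_θ(x) = Σ_λ θ_λ φ_λ(x)` (a real number thanks to the symmetry of `θ`). -/
def uFun {d : ℕ} (θ : SymmL1 d) (x : Fin d → ℝ) : ℝ :=
  (∑' l : Lam d, coeffL θ l * phiF l x).re

/-- `h_ε(θ, y)`. -/
def hEps {d : ℕ} (ε : ℝ) (c : (Fin d → ℝ) → (Fin d → ℝ) → ℝ)
    (θ : SymmL1 d) (y : Fin d → ℝ) : ℝ :=
  ε * Real.log (∫ x, Real.exp ((uFun θ x - c x y) / ε) ∂muU d) + ε

/-- `H_ε(θ) = ∫ h_ε(θ, y) dν(y)`. -/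
def HEps {d : ℕ} (ε : ℝ) (c : (Fin d → ℝ) → (Fin d → ℝ) → ℝ)
    (ν : Measure (Fin d → ℝ)) (θ : SymmL1 d) : ℝ :=
  ∫ y, hEps ε c θ y ∂ν

/-- The probability density `F_{θ,y}`. -/
def Fdens {d : ℕ} (ε : ℝ) (c : (Fin d → ℝ) → (Fin d → ℝ) → ℝ)
    (θ : SymmL1 d) (y : Fin d → ℝ) (x : Fin d → ℝ) : ℝ :=
  Real.exp ((uFun θ x - c x y) / ε) /
    ∫ x', Real.exp ((uFun θ x' - c x' y) / ε) ∂muU d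

/-- `g_λ(θ,y) = ∫ conj(φ_λ) F_{θ,y} dμ`, the `λ`-th partial derivative of `h_ε(·,y)`. -/
def gradC {d : ℕ} (ε : ℝ) (c : (Fin d → ℝ) → (Fin d → ℝ) → ℝ)
    (θ : SymmL1 d) (y : Fin d → ℝ) (l : Lam d) : ℂ :=
  ∫ x, starRingEnd ℂ (phiF l x) * (Fdens ε c θ y x : ℂ) ∂muU d

/-!
Write `e^{(u_θ - c)/ε} = e^{u_θ/ε} w` with `w = e^{-c/ε}`; `w` is integrable because a lower
semicontinuous `c` is bounded below on the compact cube. Since `|φ_λ| = 1`, each `θ ↦ u_θ(x)/ε`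
is a continuous linear functional of norm at most `1/ε`, so the bound `|e^t - 1 - t| ≤ t²` (for
`|t| ≤ 1`) makes `Z(θ) = ∫ e^{u_θ/ε} w` Fréchet differentiable, the remainder being `O(‖h‖²)`,
with derivative `τ ↦ ∫ (u_τ/ε) e^{u_θ/ε} w`. The chain rule for `ε log Z + ε` gives
`D τ = ∫ u_τ F_{θ,y}`, and since `Σ |τ_λ| < ∞` sum and integral can be exchanged, giving
`D τ = Re Σ conj(g_λ) τ_λ`. Finally `|g_λ| ≤ ∫ F_{θ,y} = 1` and `‖τ‖ = Σ |τ_λ|` give both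
norm bounds.
-/

section Semicontinuity

variable {X : Type*} [TopologicalSpace X] [MeasurableSpace X] [OpensMeasurableSpace X]
  {μ : Measure X} {s : Set X} {m : X → ℝ}

theorem LowerSemicontinuousOn.aemeasurable_restrict (hm : LowerSemicontinuousOn m s)
    (hs : MeasurableSet s) : AEMeasurable m (μ.restrict s) :=
  (aemeasurable_restrict_iff_comap_subtype hs).2
    (lowerSemicontinuous_restrict_iff.2 hm).measurable.aemeasurable

theorem LowerSemicontinuousOn.integrableOn_exp_neg_div [IsFiniteMeasureOnCompacts μ]
    (hm : LowerSemicontinuousOn m s) (hs : IsCompact s) (hs_meas : MeasurableSet s)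
    {ε : ℝ} (hε : 0 < ε) : IntegrableOn (fun x => Real.exp (-m x / ε)) s μ := by
  rcases s.eq_empty_or_nonempty with rfl | hne
  · exact integrableOn_empty
  obtain ⟨x₀, -, hx₀⟩ := hm.exists_isMinOn hne hs
  have : IsFiniteMeasure (μ.restrict s) := isFiniteMeasure_restrict.2 hs.measure_lt_top.ne
  refine (integrable_const (Real.exp (-m x₀ / ε))).mono'
    ((hm.aemeasurable_restrict hs_meas).neg.div_const ε).exp.aestronglyMeasurable ?_
  filter_upwards [ae_restrict_mem hs_meas] with x hx
  rw [Real.norm_of_nonneg (Real.exp_pos _).le, Real.exp_le_exp]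
  gcongr
  exact hx₀ hx

end Semicontinuity

section ExpIntegral

variable {X E : Type*} [MeasurableSpace X] {μ : Measure X}
  [NormedAddCommGroup E] [NormedSpace ℝ E] {u : X → E →L[ℝ] ℝ} {K : ℝ}

theorem integrable_apply_mul (hu : ∀ x, ‖u x‖ ≤ K)
    (hu_meas : ∀ τ, AEStronglyMeasurable (fun x => u x τ) μ) {v : X → ℝ} (hv : Integrable v μ)
    (τ : E) : Integrable (fun x => u x τ * v x) μ :=
  hv.bdd_mul (hu_meas τ) (.of_forall fun x => (u x).le_of_opNorm_le (hu x) τ)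

theorem integrable_exp_apply_mul (hu : ∀ x, ‖u x‖ ≤ K)
    (hu_meas : ∀ τ, AEStronglyMeasurable (fun x => u x τ) μ) {w : X → ℝ} (hw : Integrable w μ)
    (θ : E) : Integrable (fun x => Real.exp (u x θ) * w x) μ := by
  refine hw.bdd_mul (hu_meas θ).aemeasurable.exp.aestronglyMeasurable
    (c := Real.exp (K * ‖θ‖)) (.of_forall fun x => ?_)
  rw [Real.norm_of_nonneg (Real.exp_pos _).le, Real.exp_le_exp]
  exact (le_abs_self _).trans ((u x).le_of_opNorm_le (hu x) θ)

theorem exists_clm_eq_integral_apply_mul (hu : ∀ x, ‖u x‖ ≤ K)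
    (hu_meas : ∀ τ, AEStronglyMeasurable (fun x => u x τ) μ) {v : X → ℝ} (hv : Integrable v μ) :
    ∃ L : E →L[ℝ] ℝ, ∀ τ, L τ = ∫ x, u x τ * v x ∂μ := by
  let L : E →ₗ[ℝ] ℝ :=
    { toFun := fun τ => ∫ x, u x τ * v x ∂μ
      map_add' := fun τ τ' => by
        simp only [map_add, add_mul]
        exact integral_add (integrable_apply_mul hu hu_meas hv τ)
          (integrable_apply_mul hu hu_meas hv τ')
      map_smul' := fun r τ => by
        simp only [map_smul, smul_eq_mul, mul_assoc, integral_const_mul, RingHom.id_apply] }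
  refine ⟨L.mkContinuous (K * ∫ x, ‖v x‖ ∂μ) fun τ => ?_, fun τ => rfl⟩
  calc ‖L τ‖ ≤ ∫ x, K * ‖τ‖ * ‖v x‖ ∂μ := by
        refine norm_integral_le_of_norm_le (hv.norm.const_mul _) (.of_forall fun x => ?_)
        rw [norm_mul]
        exact mul_le_mul_of_nonneg_right ((u x).le_of_opNorm_le (hu x) τ) (norm_nonneg _)
    _ = K * (∫ x, ‖v x‖ ∂μ) * ‖τ‖ := by rw [integral_const_mul]; ring

theorem abs_exp_add_mul_sub_le {s t a : ℝ} (ht : |t| ≤ 1) :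
    |Real.exp (s + t) * a - Real.exp s * a - t * (Real.exp s * a)| ≤
      t ^ 2 * (Real.exp s * |a|) := by
  have : Real.exp (s + t) * a - Real.exp s * a - t * (Real.exp s * a) =
      Real.exp s * a * (Real.exp t - 1 - t) := by
    rw [Real.exp_add]; ring
  rw [this, abs_mul, abs_mul, abs_of_pos (Real.exp_pos s), mul_comm (t ^ 2)]
  exact mul_le_mul_of_nonneg_left (Real.abs_exp_sub_one_sub_id_le ht) (by positivity)

theorem hasFDerivAt_integral_exp_apply_mul (hu : ∀ x, ‖u x‖ ≤ K)
    (hu_meas : ∀ τ, AEStronglyMeasurable (fun x => u x τ) μ) {w : X → ℝ} (hw : Integrable w μ)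
    {θ : E} {L : E →L[ℝ] ℝ} (hL : ∀ τ, L τ = ∫ x, u x τ * (Real.exp (u x θ) * w x) ∂μ) :
    HasFDerivAt (fun θ' => ∫ x, Real.exp (u x θ') * w x ∂μ) L θ := by
  have hint := integrable_exp_apply_mul hu hu_meas hw
  rw [hasFDerivAt_iff_isLittleO_nhds_zero]
  refine Asymptotics.IsBigO.trans_isLittleO ?_ (Asymptotics.isLittleO_norm_pow_id one_lt_two)
  refine .of_bound (K ^ 2 * ∫ x, Real.exp (u x θ) * |w x| ∂μ) ?_
  have hsmall : ∀ᶠ h in 𝓝 (0 : E), K * ‖h‖ < 1 :=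
    (continuous_const.mul continuous_norm).continuousAt.eventually_lt continuousAt_const
      (by simp)
  filter_upwards [hsmall] with h hh
  have hdiff : Integrable (fun x => Real.exp (u x (θ + h)) * w x - Real.exp (u x θ) * w x) μ :=
    (hint _).sub (hint _)
  rw [hL, ← integral_sub (hint _) (hint _), ← integral_sub hdiff
    (integrable_apply_mul hu hu_meas (hint θ) h), norm_pow, norm_norm]
  calc _ ≤ ∫ x, (K * ‖h‖) ^ 2 * (Real.exp (u x θ) * |w x|) ∂μ := by
        refine norm_integral_le_of_norm_le
          (((hint θ).abs.congr (.of_forall fun x => ?_)).const_mul _) (.of_forall fun x => ?_)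
        · simp [abs_mul]
        · have ht : |u x h| ≤ K * ‖h‖ := (u x).le_of_opNorm_le (hu x) h
          rw [map_add, Real.norm_eq_abs]
          refine (abs_exp_add_mul_sub_le (ht.trans hh.le)).trans ?_
          gcongr ?_ * _
          rw [← sq_abs]
          exact pow_le_pow_left₀ (abs_nonneg _) ht 2
    _ = K ^ 2 * (∫ x, Real.exp (u x θ) * |w x| ∂μ) * ‖h‖ ^ 2 := by
        rw [integral_const_mul]; ring

end ExpIntegral

theorem tsum_integral_mul_eq_integral_tsum_mul {ι X : Type*} [Countable ι] [MeasurableSpace X]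
    {μ : Measure X} {φ : ι → X → ℂ} (hφ : ∀ i x, ‖φ i x‖ ≤ 1)
    (hφ_meas : ∀ i, AEStronglyMeasurable (φ i) μ) {a : ι → ℂ} (ha : Summable fun i => ‖a i‖)
    {f : X → ℂ} (hf : Integrable f μ) :
    ∑' i, (∫ x, φ i x * f x ∂μ) * a i = ∫ x, (∑' i, φ i x * a i) * f x ∂μ := by
  have hbound : ∀ i x, ‖φ i x * a i‖ ≤ ‖a i‖ := fun i x => by
    simpa [norm_mul] using mul_le_mul_of_nonneg_right (hφ i x) (norm_nonneg (a i))
  have hint : ∀ i, Integrable (fun x => φ i x * a i * f x) μ := fun i =>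
    hf.bdd_mul ((hφ_meas i).mul_const _) (.of_forall (hbound i))
  simp_rw [← integral_mul_const, mul_right_comm _ _ (a _), ← tsum_mul_right]
  refine integral_tsum_of_summable_integral_norm hint
    (.of_nonneg_of_le (fun i => integral_nonneg fun x => norm_nonneg _) (fun i => ?_)
      (ha.mul_right (∫ x, ‖f x‖ ∂μ)))
  rw [← integral_const_mul]
  refine integral_mono (hint i).norm (hf.norm.const_mul _) fun x => ?_
  rw [norm_mul]
  exact mul_le_mul_of_nonneg_right (hbound i x) (norm_nonneg _)

section FourierSeries

variable {d : ℕ}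

theorem norm_phiF (l : Lam d) (x : Fin d → ℝ) : ‖phiF l x‖ = 1 := by
  rw [phiF, Complex.norm_exp]
  simp [Complex.mul_re, ← Complex.ofReal_intCast, ← Complex.ofReal_mul, ← Complex.ofReal_sum]

theorem continuous_phiF (l : Lam d) : Continuous (phiF l) := by
  unfold phiF
  fun_prop

theorem summable_norm_coeffL (θ : SymmL1 d) : Summable fun l => ‖coeffL θ l‖ := by
  simpa [coeffL] using (lp.memℓp (θ : lp (fun _ : Lam d => ℂ) 1)).summable one_pos

theorem tsum_norm_coeffL (θ : SymmL1 d) : ∑' l, ‖coeffL θ l‖ = ‖θ‖ := by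
  simpa [coeffL] using (lp.norm_eq_tsum_rpow one_pos (θ : lp (fun _ : Lam d => ℂ) 1)).symm

theorem coeffL_add (θ τ : SymmL1 d) (l : Lam d) : coeffL (θ + τ) l = coeffL θ l + coeffL τ l :=
  rfl

theorem coeffL_smul (r : ℝ) (θ : SymmL1 d) (l : Lam d) : coeffL (r • θ) l = r * coeffL θ l :=
  Complex.real_smul

variable {b : Lam d → ℂ} {C : ℝ}

theorem summable_mul_coeffL (hb : ∀ l, ‖b l‖ ≤ C) (τ : SymmL1 d) :
    Summable fun l => b l * coeffL τ l :=
  .of_norm_bounded ((summable_norm_coeffL τ).mul_left C) fun l => by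
    rw [norm_mul]
    exact mul_le_mul_of_nonneg_right (hb l) (norm_nonneg _)

theorem norm_tsum_mul_coeffL_le (hb : ∀ l, ‖b l‖ ≤ C) (τ : SymmL1 d) :
    ‖∑' l, b l * coeffL τ l‖ ≤ C * ‖τ‖ := by
  rw [← tsum_norm_coeffL, ← tsum_mul_left]
  refine tsum_of_norm_bounded ((summable_norm_coeffL τ).mul_left C).hasSum fun l => ?_
  rw [norm_mul]
  exact mul_le_mul_of_nonneg_right (hb l) (norm_nonneg _)

theorem tsum_mul_coeffL_add (hb : ∀ l, ‖b l‖ ≤ C) (θ τ : SymmL1 d) :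
    ∑' l, b l * coeffL (θ + τ) l = ∑' l, b l * coeffL θ l + ∑' l, b l * coeffL τ l := by
  simp only [coeffL_add, mul_add]
  exact (summable_mul_coeffL hb θ).tsum_add (summable_mul_coeffL hb τ)

theorem tsum_mul_coeffL_smul (r : ℝ) (τ : SymmL1 d) :
    ∑' l, b l * coeffL (r • τ) l = r * ∑' l, b l * coeffL τ l := by
  simp only [coeffL_smul, mul_left_comm (b _), tsum_mul_left]

theorem uFun_eq_re_tsum (θ : SymmL1 d) (x : Fin d → ℝ) :
    uFun θ x = (∑' l, phiF l x * coeffL θ l).re := by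
  simp only [uFun, mul_comm (coeffL θ _)]

theorem continuous_tsum_phiF_mul_coeffL (θ : SymmL1 d) :
    Continuous fun x => ∑' l, phiF l x * coeffL θ l :=
  continuous_tsum (fun l => (continuous_phiF l).mul continuous_const) (summable_norm_coeffL θ)
    fun l x => by rw [norm_mul, norm_phiF, one_mul]

theorem continuous_uFun (θ : SymmL1 d) : Continuous (uFun θ) := by
  rw [funext (uFun_eq_re_tsum θ)]
  exact Complex.continuous_re.comp (continuous_tsum_phiF_mul_coeffL θ)

def uFunCLM (x : Fin d → ℝ) : SymmL1 d →L[ℝ] ℝ :=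
  LinearMap.mkContinuous
    { toFun := fun θ => uFun θ x
      map_add' := fun θ τ => by
        simp only [uFun_eq_re_tsum, tsum_mul_coeffL_add (fun l => (norm_phiF l x).le),
          Complex.add_re]
      map_smul' := fun r θ => by
        simp only [uFun_eq_re_tsum, tsum_mul_coeffL_smul, Complex.re_ofReal_mul,
          RingHom.id_apply, smul_eq_mul] }
    1 fun θ => by
      simp only [LinearMap.coe_mk, AddHom.coe_mk, uFun_eq_re_tsum, Real.norm_eq_abs]
      exact (Complex.abs_re_le_norm _).trans
        (norm_tsum_mul_coeffL_le (fun l => (norm_phiF l x).le) θ)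

@[simp]
theorem uFunCLM_apply (x : Fin d → ℝ) (θ : SymmL1 d) : uFunCLM x θ = uFun θ x :=
  rfl

theorem norm_uFunCLM_le (x : Fin d → ℝ) : ‖uFunCLM (d := d) x‖ ≤ 1 :=
  LinearMap.mkContinuous_norm_le _ zero_le_one _

end FourierSeries

section Gibbs

variable {d : ℕ} {ε : ℝ} {c : (Fin d → ℝ) → (Fin d → ℝ) → ℝ} {y : Fin d → ℝ}

instance : IsProbabilityMeasure (muU d) :=
  ⟨by simp [muU, cube, Real.volume_Icc_pi]⟩

theorem exp_uFun_sub_div_eq (θ : SymmL1 d) (x : Fin d → ℝ) :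
    Real.exp ((uFun θ x - c x y) / ε) =
      Real.exp ((ε⁻¹ • uFunCLM x) θ) * Real.exp (-c x y / ε) := by
  rw [← Real.exp_add]
  simp only [smul_apply, uFunCLM_apply, smul_eq_mul]
  ring_nf

theorem norm_smul_uFunCLM_le (x : Fin d → ℝ) : ‖ε⁻¹ • uFunCLM (d := d) x‖ ≤ ‖ε⁻¹‖ :=
  (norm_smul_le _ _).trans (mul_le_of_le_one_right (norm_nonneg _) (norm_uFunCLM_le x))

theorem aestronglyMeasurable_smul_uFunCLM_apply (τ : SymmL1 d) :
    AEStronglyMeasurable (fun x => (ε⁻¹ • uFunCLM x) τ) (muU d) :=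
  ((continuous_uFun τ).const_smul ε⁻¹).aestronglyMeasurable

theorem integrable_exp_uFun_sub_div (hw : Integrable (fun x => Real.exp (-c x y / ε)) (muU d))
    (θ : SymmL1 d) :
    Integrable (fun x => Real.exp ((uFun θ x - c x y) / ε)) (muU d) := by
  simp_rw [exp_uFun_sub_div_eq]
  exact integrable_exp_apply_mul norm_smul_uFunCLM_le aestronglyMeasurable_smul_uFunCLM_apply hw θ

theorem integral_exp_uFun_sub_div_pos
    (hw : Integrable (fun x => Real.exp (-c x y / ε)) (muU d)) (θ : SymmL1 d) :
    0 < ∫ x, Real.exp ((uFun θ x - c x y) / ε) ∂muU d :=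
  integral_exp_pos (integrable_exp_uFun_sub_div hw θ)

theorem Fdens_nonneg (θ : SymmL1 d) (x : Fin d → ℝ) : 0 ≤ Fdens ε c θ y x :=
  div_nonneg (Real.exp_pos _).le (integral_nonneg fun _ => (Real.exp_pos _).le)

theorem integral_Fdens (hw : Integrable (fun x => Real.exp (-c x y / ε)) (muU d))
    (θ : SymmL1 d) : ∫ x, Fdens ε c θ y x ∂muU d = 1 := by
  simp only [Fdens, integral_div]
  exact div_self (integral_exp_uFun_sub_div_pos hw θ).ne'

theorem norm_gradC_le_one (hw : Integrable (fun x => Real.exp (-c x y / ε)) (muU d))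
    (θ : SymmL1 d) (l : Lam d) : ‖gradC ε c θ y l‖ ≤ 1 := by
  refine (norm_integral_le_integral_norm _).trans_eq ?_
  simp only [norm_mul, Complex.norm_conj, norm_phiF, one_mul, Complex.norm_real,
    Real.norm_of_nonneg (Fdens_nonneg θ _)]
  exact integral_Fdens hw θ

theorem re_tsum_conj_gradC_mul_coeffL
    (hw : Integrable (fun x => Real.exp (-c x y / ε)) (muU d)) (θ τ : SymmL1 d) :
    (∑' l, starRingEnd ℂ (gradC ε c θ y l) * coeffL τ l).re =
      ∫ x, uFun τ x * Fdens ε c θ y x ∂muU d := by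
  have hF : Integrable (fun x => (Fdens ε c θ y x : ℂ)) (muU d) :=
    ((integrable_exp_uFun_sub_div hw θ).div_const _).ofReal
  simp only [gradC, ← integral_conj, map_mul, Complex.conj_conj, Complex.conj_ofReal]
  rw [tsum_integral_mul_eq_integral_tsum_mul (fun l x => (norm_phiF l x).le)
    (fun l => (continuous_phiF l).aestronglyMeasurable) (summable_norm_coeffL τ) hF,
    ← RCLike.re_to_complex, ← integral_re (hF.bdd_mul
    (continuous_tsum_phiF_mul_coeffL τ).aestronglyMeasurable
    (.of_forall fun x => norm_tsum_mul_coeffL_le (fun l => (norm_phiF l x).le) τ))]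
  simp only [RCLike.re_to_complex, Complex.re_mul_ofReal, uFun_eq_re_tsum]

theorem hasFDerivAt_hEps (hε : ε ≠ 0)
    (hw : Integrable (fun x => Real.exp (-c x y / ε)) (muU d)) (θ : SymmL1 d) :
    ∃ D : SymmL1 d →L[ℝ] ℝ, HasFDerivAt (fun θ' => hEps ε c θ' y) D θ ∧
      ∀ τ, D τ = ∫ x, uFun τ x * Fdens ε c θ y x ∂muU d := by
  set Z := fun θ' => ∫ x, Real.exp ((uFun θ' x - c x y) / ε) ∂muU d with hZ_def
  obtain ⟨L, hL⟩ := exists_clm_eq_integral_apply_mul norm_smul_uFunCLM_le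
    aestronglyMeasurable_smul_uFunCLM_apply
    (integrable_exp_apply_mul norm_smul_uFunCLM_le aestronglyMeasurable_smul_uFunCLM_apply hw θ)
  have hZ : HasFDerivAt Z L θ := by
    simpa only [hZ_def, exp_uFun_sub_div_eq] using hasFDerivAt_integral_exp_apply_mul
      norm_smul_uFunCLM_le aestronglyMeasurable_smul_uFunCLM_apply hw hL
  have hZpos : 0 < Z θ := integral_exp_uFun_sub_div_pos hw θ
  refine ⟨ε • (Z θ)⁻¹ • L,
    (((Real.hasDerivAt_log hZpos.ne').comp_hasFDerivAt θ hZ).const_mul ε).add_const ε,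
    fun τ => ?_⟩
  simp only [smul_apply, smul_eq_mul, hL, ← integral_const_mul]
  refine integral_congr_ae (.of_forall fun x => ?_)
  simp only [hZ_def, Fdens, exp_uFun_sub_div_eq (ε := ε) θ, smul_apply, uFunCLM_apply,
    smul_eq_mul] at hZpos ⊢
  field_simp

end Gibbs

theorem statement0_general
    (d : ℕ) (ε : ℝ) (hε : 0 < ε)
    (Y : Set (Fin d → ℝ))
    (c : (Fin d → ℝ) → (Fin d → ℝ) → ℝ)
    (hc_lsc : LowerSemicontinuousOn (fun p : (Fin d → ℝ) × (Fin d → ℝ) => c p.1 p.2)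
      (cube d ×ˢ Y)) :
    ∀ y ∈ Y, ∀ θ : SymmL1 d,
      ∃ D : SymmL1 d →L[ℝ] ℝ,
        HasFDerivAt (fun θ' => hEps ε c θ' y) D θ ∧
        (∀ τ : SymmL1 d,
          D τ = (∑' l : Lam d, starRingEnd ℂ (gradC ε c θ y l) * coeffL τ l).re) ∧
        ‖D‖ ≤ (⨆ l : Lam d, ‖gradC ε c θ y l‖) ∧
        (⨆ l : Lam d, ‖gradC ε c θ y l‖) ≤ 1 := by
  intro y hy θ
  have hw : Integrable (fun x => Real.exp (-c x y / ε)) (muU d) :=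
    (hc_lsc.comp (Continuous.prodMk_left y).continuousOn fun x hx => ⟨hx, hy⟩)
      |>.integrableOn_exp_neg_div isCompact_Icc measurableSet_Icc hε
  obtain ⟨D, hD, hD_apply⟩ := hasFDerivAt_hEps hε.ne' hw θ
  have hD_eq : ∀ τ, D τ = (∑' l, starRingEnd ℂ (gradC ε c θ y l) * coeffL τ l).re :=
    fun τ => (hD_apply τ).trans (re_tsum_conj_gradC_mul_coeffL hw θ τ).symm
  have hg := norm_gradC_le_one hw θ
  have hbdd : BddAbove (Set.range fun l => ‖gradC ε c θ y l‖) :=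
    ⟨1, by rintro _ ⟨l, rfl⟩; exact hg l⟩
  refine ⟨D, hD, hD_eq, D.opNorm_le_bound (Real.iSup_nonneg fun _ => norm_nonneg _) fun τ => ?_,
    Real.iSup_le hg zero_le_one⟩
  rw [hD_eq, Real.norm_eq_abs]
  exact (Complex.abs_re_le_norm _).trans <| norm_tsum_mul_coeffL_le
    (fun l => (Complex.norm_conj _).trans_le (le_ciSup hbdd l)) τ

/-- Proposition: first Fréchet derivative of `h_ε(·,y)`.
For every `y ∈ 𝒴` and every `θ ∈ ℓ̄₁(Λ)`, the map `θ ↦ h_ε(θ,y)` is Fréchet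
differentiable at `θ`, with derivative `τ ↦ Σ_λ conj(g_λ(θ,y)) τ_λ`, whose operator
norm is bounded by `sup_λ |g_λ(θ,y)| ≤ 1`. -/
theorem statement0
    (d : ℕ) (hd : 0 < d) (ε : ℝ) (hε : 0 < ε)
    (Y : Set (Fin d → ℝ)) (ν : Measure (Fin d → ℝ)) [IsProbabilityMeasure ν]
    (hνY : ν Yᶜ = 0)
    (c : (Fin d → ℝ) → (Fin d → ℝ) → ℝ)
    (hc_lsc : LowerSemicontinuousOn (fun p : (Fin d → ℝ) × (Fin d → ℝ) => c p.1 p.2)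
      (cube d ×ˢ Y))
    (hc_int : Integrable (fun p : (Fin d → ℝ) × (Fin d → ℝ) => c p.1 p.2) ((muU d).prod ν)) :
    ∀ y ∈ Y, ∀ θ : SymmL1 d,
      ∃ D : SymmL1 d →L[ℝ] ℝ,
        HasFDerivAt (fun θ' => hEps ε c θ' y) D θ ∧
        (∀ τ : SymmL1 d,
          D τ = (∑' l : Lam d, starRingEnd ℂ (gradC ε c θ y l) * coeffL τ l).re) ∧
        ‖D‖ ≤ (⨆ l : Lam d, ‖gradC ε c θ y l‖) ∧
        (⨆ l : Lam d, ‖gradC ε c θ y l‖) ≤ 1 :=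
  statement0_general d ε hε Y c hc_lsc

end
end

section
/- Let φ : [0,1] → ℝ be three times continuously differentiable with φ''(t) ≥ 0 for all t ∈ [0,1], and let δ > 0 be such that |φ'''(t)| ≤ δ φ''(t) for all t ∈ [0,1]. Then φ''(t) ≥ e^{−δt} φ''(0) for all t ∈ [0,1], and consequently φ'(1) − φ'(0) ≥ ((1 − e^{−δ})/δ) φ''(0). -/
/-!
The weight `t ↦ e^{δt} φ''(t)` has derivative `e^{δt} (δ φ'' + φ''')`, which is nonnegative by the
self-concordance inequality; so it is monotone, which is the first claim. Integrating this lower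
bound for `φ''` over `[0,1]` gives the second.
-/

open Real Set

theorem monotoneOn_exp_mul_of_neg_mul_le_deriv {f f' : ℝ → ℝ} {a b δ : ℝ}
    (hf : ∀ t ∈ Icc a b, HasDerivAt f (f' t) t) (hf' : ∀ t ∈ Icc a b, -(δ * f t) ≤ f' t) :
    MonotoneOn (fun t => exp (δ * t) * f t) (Icc a b) := by
  have hderiv : ∀ t ∈ Icc a b,
      HasDerivAt (fun t => exp (δ * t) * f t) (exp (δ * t) * (δ * f t + f' t)) t := by
    intro t ht
    have hexp : HasDerivAt (fun t => exp (δ * t)) (exp (δ * t) * δ) t := by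
      simpa using ((hasDerivAt_id t).const_mul δ).exp
    exact (hexp.mul (hf t ht)).congr_deriv (by ring)
  refine monotoneOn_of_hasDerivWithinAt_nonneg (convex_Icc a b)
    (fun t ht => (hderiv t ht).continuousAt.continuousWithinAt)
    (fun t ht => (hderiv t (interior_subset ht)).hasDerivWithinAt) fun t ht => ?_
  have := hf' t (interior_subset ht)
  have : 0 ≤ δ * f t + f' t := by linarith
  positivity

theorem exp_neg_mul_sub_mul_le_of_neg_mul_le_deriv {f f' : ℝ → ℝ} {a b δ : ℝ}
    (hf : ∀ t ∈ Icc a b, HasDerivAt f (f' t) t) (hf' : ∀ t ∈ Icc a b, -(δ * f t) ≤ f' t)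
    {t : ℝ} (ht : t ∈ Icc a b) :
    exp (-δ * (t - a)) * f a ≤ f t := by
  have hmono := monotoneOn_exp_mul_of_neg_mul_le_deriv hf hf'
    (left_mem_Icc.mpr (ht.1.trans ht.2)) ht ht.1
  calc exp (-δ * (t - a)) * f a = exp (-(δ * t)) * (exp (δ * a) * f a) := by
        rw [← mul_assoc, ← exp_add]; ring_nf
    _ ≤ exp (-(δ * t)) * (exp (δ * t) * f t) := by gcongr
    _ = f t := by rw [← mul_assoc, ← exp_add, neg_add_cancel, exp_zero, one_mul]

theorem integral_exp_mul {c : ℝ} (hc : c ≠ 0) (a b : ℝ) :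
    ∫ x in a..b, exp (c * x) = (exp (c * b) - exp (c * a)) / c := by
  rw [intervalIntegral.integral_comp_mul_left exp hc, integral_exp, smul_eq_mul, inv_mul_eq_div]

theorem statement14_general (φ p1 p2 p3 : ℝ → ℝ)
    (hder : ∀ t ∈ Icc (0 : ℝ) 1,
      HasDerivAt φ (p1 t) t ∧ HasDerivAt p1 (p2 t) t ∧ HasDerivAt p2 (p3 t) t)
    (δ : ℝ) (hδ : 0 < δ)
    (hsc : ∀ t ∈ Icc (0 : ℝ) 1, |p3 t| ≤ δ * p2 t) :
    (∀ t ∈ Icc (0 : ℝ) 1, p2 t ≥ Real.exp (-δ * t) * p2 0) ∧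
    p1 1 - p1 0 ≥ ((1 - Real.exp (-δ)) / δ) * p2 0 := by
  have hlower : ∀ t ∈ Icc (0 : ℝ) 1, p2 t ≥ exp (-δ * t) * p2 0 := fun t ht => by
    simpa using exp_neg_mul_sub_mul_le_of_neg_mul_le_deriv (fun s hs => (hder s hs).2.2)
      (fun s hs => (abs_le.mp (hsc s hs)).1) ht
  refine ⟨hlower, ?_⟩
  have huIcc : uIcc (0 : ℝ) 1 = Icc 0 1 := uIcc_of_le zero_le_one
  have hp2 : IntervalIntegrable p2 MeasureTheory.volume 0 1 :=
    (ContinuousOn.intervalIntegrable fun t ht =>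
      (hder t (huIcc ▸ ht)).2.2.continuousAt.continuousWithinAt)
  calc ((1 - exp (-δ)) / δ) * p2 0 = ∫ t in (0 : ℝ)..1, exp (-δ * t) * p2 0 := by
        rw [intervalIntegral.integral_mul_const, integral_exp_mul (neg_ne_zero.mpr hδ.ne'),
          mul_one, mul_zero, exp_zero, div_neg, ← neg_div, neg_sub]
    _ ≤ ∫ t in (0 : ℝ)..1, p2 t :=
        intervalIntegral.integral_mono_on zero_le_one
          ((by fun_prop : Continuous fun t => exp (-δ * t) * p2 0).intervalIntegrable 0 1)
          hp2 hlower
    _ = p1 1 - p1 0 :=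
        intervalIntegral.integral_eq_sub_of_hasDerivAt (fun t ht => (hder t (huIcc ▸ ht)).2.1) hp2

/-- Grönwall-type consequence of a self-concordance inequality.
If `φ : [0,1] → ℝ` is three times continuously differentiable with `φ'' ≥ 0` on
`[0,1]` and `|φ'''(t)| ≤ δ φ''(t)` on `[0,1]` for some `δ > 0`, then
`φ''(t) ≥ e^{−δt} φ''(0)` on `[0,1]`, and `φ'(1) − φ'(0) ≥ ((1 − e^{−δ})/δ) φ''(0)`. -/
theorem statement14 (φ p1 p2 p3 : ℝ → ℝ)
    (hder : ∀ t ∈ Icc (0 : ℝ) 1,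
      HasDerivAt φ (p1 t) t ∧ HasDerivAt p1 (p2 t) t ∧ HasDerivAt p2 (p3 t) t)
    (hcont : ContinuousOn p3 (Icc (0 : ℝ) 1))
    (hconv : ∀ t ∈ Icc (0 : ℝ) 1, 0 ≤ p2 t)
    (δ : ℝ) (hδ : 0 < δ)
    (hsc : ∀ t ∈ Icc (0 : ℝ) 1, |p3 t| ≤ δ * p2 t) :
    (∀ t ∈ Icc (0 : ℝ) 1, p2 t ≥ Real.exp (-δ * t) * p2 0) ∧
    p1 1 - p1 0 ≥ ((1 - Real.exp (-δ)) / δ) * p2 0 :=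
  statement14_general φ p1 p2 p3 hder δ hδ hsc
end
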